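/- For every n ≥ 1, max{ b(m) : 3^(n−1) ≤ m ≤ 3^n } = ((√2+1)^n + (√2−1)^n)/2. -/
import Mathlib

noncomputable def Mn (n : ℕ) : ℝ := ((Real.sqrt 2 + 1) ^ n + (Real.sqrt 2 - 1) ^ n) / 2
noncomputable def Nn (n : ℕ) : ℝ := ((Real.sqrt 2 + 1) ^ n - (Real.sqrt 2 - 1) ^ n) / 2

lemma sqrt2_ge_one : (1:ℝ) ≤ Real.sqrt 2 := by
  have h := Real.sqrt_le_sqrt (show (1:ℝ) ≤ 2 by norm_num)
  rwa [Real.sqrt_one] at h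

lemma Nn_nonneg (n : ℕ) : 0 ≤ Nn n := by
  have h1 : (0:ℝ) ≤ Real.sqrt 2 - 1 := by linarith [sqrt2_ge_one]
  have h2 : Real.sqrt 2 - 1 ≤ Real.sqrt 2 + 1 := by linarith
  have h3 := pow_le_pow_left₀ h1 h2 n
  unfold Nn; linarith

lemma Mn_nonneg (n : ℕ) : 0 ≤ Mn n := by
  have h1 : (0:ℝ) ≤ Real.sqrt 2 - 1 := by linarith [sqrt2_ge_one]
  have h3 := pow_nonneg h1 n
  have h2 : (0:ℝ) ≤ Real.sqrt 2 + 1 := by linarith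
  have h4 := pow_nonneg h2 n
  unfold Mn; linarith

lemma Mn_succ (n : ℕ) : Mn (n+1) = Nn n + Real.sqrt 2 * Mn n := by
  unfold Mn Nn; simp only [pow_succ]; ring

lemma Nn_succ (n : ℕ) : Nn (n+1) = Mn n + Real.sqrt 2 * Nn n := by
  unfold Mn Nn; simp only [pow_succ]; ring

lemma Mn_one : Mn 1 = Real.sqrt 2 := by unfold Mn; rw [pow_one, pow_one]; ring
lemma Nn_one : Nn 1 = 1 := by unfold Nn; rw [pow_one, pow_one]; ring

lemma key (b : ℕ → ℝ)
    (hb0 : b 0 = 0) (hb1 : b 1 = 1)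
    (hrec0 : ∀ n : ℕ, b (3 * n) = b n)
    (hrec1 : ∀ n : ℕ, b (3 * n + 1) = Real.sqrt 2 * b n + b (n + 1))
    (hrec2 : ∀ n : ℕ, b (3 * n + 2) = b n + Real.sqrt 2 * b (n + 1)) :
    ∀ n : ℕ, ∀ m : ℕ, 3 ^ n ≤ m → m < 3 ^ (n+1) →
      b m ≤ Mn (n+1) ∧ b (m+1) ≤ Mn (n+1) ∧ b m + b (m+1) ≤ Mn (n+1) + Nn (n+1) := by
  intro n
  induction n with
  | zero =>
    intro m h1 h2
    norm_num at h1 h2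
    have hb2 : b 2 = Real.sqrt 2 := by
      have := hrec2 0; simpa [hb0, hb1] using this
    have hb3 : b 3 = 1 := by
      have := hrec0 1; simpa [hb1] using this
    have hs := sqrt2_ge_one
    have hM1 : Mn (0+1) = Real.sqrt 2 := Mn_one
    have hN1 : Nn (0+1) = 1 := Nn_one
    interval_cases m <;> refine ⟨?_, ?_, ?_⟩ <;>
      simp only [hb1, hb2, hb3, hM1, hN1, show (1:ℕ)+1=2 from rfl, show (2:ℕ)+1=3 from rfl] <;>
      linarith
  | succ n ih =>
    intro m h1 h2
    obtain ⟨q, r, hr3, hq⟩ : ∃ q r, r < 3 ∧ 3 * q + r = m :=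
      ⟨m / 3, m % 3, Nat.mod_lt _ (by norm_num), Nat.div_add_mod m 3⟩
    have hp1 : (3:ℕ) ^ (n+1) = 3 * 3 ^ n := by rw [pow_succ]; ring
    have hp2 : (3:ℕ) ^ (n+2) = 3 * 3 ^ (n+1) := by rw [pow_succ]; ring
    have hq1 : 3 ^ n ≤ q := by omega
    have hq2 : q < 3 ^ (n+1) := by omega
    obtain ⟨hx, hy, hxy⟩ := ih q hq1 hq2
    have hs := sqrt2_ge_one
    have hM := Mn_nonneg (n+1)
    have hN := Nn_nonneg (n+1)
    rw [Mn_succ (n+1), Nn_succ (n+1)]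
    have hr : r = 0 ∨ r = 1 ∨ r = 2 := by omega
    rcases hr with hr | hr | hr
    · -- m = 3 * q
      have hm : m = 3 * q := by omega
      subst hm
      rw [hrec0 q, hrec1 q]
      refine ⟨by nlinarith, by nlinarith, by nlinarith⟩
    · -- m = 3 * q + 1
      have hm : m = 3 * q + 1 := by omega
      subst hm
      rw [hrec1 q, show 3 * q + 1 + 1 = 3 * q + 2 from rfl, hrec2 q]
      refine ⟨by nlinarith, by nlinarith, by nlinarith⟩
    · -- m = 3 * q + 2
      have hm : m = 3 * q + 2 := by omega
      subst hm
      rw [hrec2 q, show 3 * q + 2 + 1 = 3 * (q + 1) from by ring, hrec0 (q+1)]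
      refine ⟨by nlinarith, by nlinarith, by nlinarith⟩

def cseq : ℕ → ℕ
  | 0 => 1
  | n + 1 => 3 * cseq n + 1

lemma cseq_bounds (n : ℕ) : 3 ^ n ≤ cseq n ∧ cseq n < 3 ^ (n+1) := by
  induction n with
  | zero => simp [cseq]
  | succ n ih =>
    have hp1 : (3:ℕ) ^ (n+1) = 3 * 3 ^ n := by rw [pow_succ]; ring
    have hp2 : (3:ℕ) ^ (n+2) = 3 * 3 ^ (n+1) := by rw [pow_succ]; ring
    simp only [cseq]
    omega

lemma attain (b : ℕ → ℝ)
    (hb0 : b 0 = 0) (hb1 : b 1 = 1)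
    (hrec0 : ∀ n : ℕ, b (3 * n) = b n)
    (hrec1 : ∀ n : ℕ, b (3 * n + 1) = Real.sqrt 2 * b n + b (n + 1))
    (hrec2 : ∀ n : ℕ, b (3 * n + 2) = b n + Real.sqrt 2 * b (n + 1)) :
    ∀ n : ℕ, b (cseq n) = Nn (n+1) ∧ b (cseq n + 1) = Mn (n+1) := by
  intro n
  induction n with
  | zero =>
    have hb2 : b 2 = Real.sqrt 2 := by
      have := hrec2 0; simpa [hb0, hb1] using this
    simp [cseq, hb1, hb2, Mn_one, Nn_one]
  | succ n ih =>
    obtain ⟨ihN, ihM⟩ := ih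
    constructor
    · show b (3 * cseq n + 1) = Nn (n+2)
      rw [hrec1 (cseq n), ihN, ihM, Nn_succ (n+1)]
      ring
    · show b (3 * cseq n + 1 + 1) = Mn (n+2)
      rw [show 3 * cseq n + 1 + 1 = 3 * cseq n + 2 from rfl,
        hrec2 (cseq n), ihN, ihM, Mn_succ (n+1)]

theorem northshield_max (b : ℕ → ℝ)
    (hb0 : b 0 = 0) (hb1 : b 1 = 1)
    (hrec0 : ∀ n : ℕ, b (3 * n) = b n)
    (hrec1 : ∀ n : ℕ, b (3 * n + 1) = Real.sqrt 2 * b n + b (n + 1))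
    (hrec2 : ∀ n : ℕ, b (3 * n + 2) = b n + Real.sqrt 2 * b (n + 1)) :
    ∀ n : ℕ, 1 ≤ n →
      IsGreatest (b '' Set.Icc (3 ^ (n - 1)) (3 ^ n))
        (((Real.sqrt 2 + 1) ^ n + (Real.sqrt 2 - 1) ^ n) / 2) := by
  intro n hn
  obtain ⟨k, rfl⟩ : ∃ k, n = k + 1 := ⟨n - 1, by omega⟩
  simp only [Nat.add_sub_cancel]
  have hval : ((Real.sqrt 2 + 1) ^ (k+1) + (Real.sqrt 2 - 1) ^ (k+1)) / 2 = Mn (k+1) := rfl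
  rw [hval]
  obtain ⟨hc1, hc2⟩ := cseq_bounds k
  obtain ⟨haN, haM⟩ := attain b hb0 hb1 hrec0 hrec1 hrec2 k
  constructor
  · exact ⟨cseq k + 1, ⟨by omega, by omega⟩, haM⟩
  · rintro x ⟨m, ⟨hm1, hm2⟩, rfl⟩
    rcases lt_or_eq_of_le hm2 with h | h
    · exact (key b hb0 hb1 hrec0 hrec1 hrec2 k m hm1 h).1
    · have hp : (1:ℕ) ≤ 3 ^ k := Nat.one_le_pow _ _ (by norm_num)
      have hp2 : (3:ℕ) ^ (k+1) = 3 * 3 ^ k := by rw [pow_succ]; ring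
      have hm : m = (3 ^ (k+1) - 1) + 1 := by omega
      rw [hm]
      exact (key b hb0 hb1 hrec0 hrec1 hrec2 k (3 ^ (k+1) - 1) (by omega) (by omega)).2.1
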